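/- Let (X, ‖·‖) be a Banach space and T : X → X a mapping. Suppose there exists r ∈ [0, 1) such that for all x, y ∈ X: f(r)‖x − Tx‖ ≤ ‖x − y‖ implies ‖Tx − Ty‖ ≤ r‖x − y‖. Then T has a unique fixed point. -/
import Mathlib


/-- The function f from Suzuki's theorem: f(r) = 1 on [0, (√5−1)/2],
    (1−r)/r² on ((√5−1)/2, 1/√2), and 1/(1+r) on [1/√2, 1). -/
noncomputable def suzukiF (r : ℝ) : ℝ :=
  if r ≤ (Real.sqrt 5 - 1) / 2 then 1
  else if r < 1 / Real.sqrt 2 then (1 - r) / r ^ 2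
  else 1 / (1 + r)

lemma sqrt5_sq : (Real.sqrt 5) ^ 2 = 5 := Real.sq_sqrt (by norm_num)
lemma sqrt2_sq : (Real.sqrt 2) ^ 2 = 2 := Real.sq_sqrt (by norm_num)

lemma suzukiF_nonneg {r : ℝ} (h0 : 0 ≤ r) (h1 : r < 1) : 0 ≤ suzukiF r := by
  unfold suzukiF
  have h5 := Real.sqrt_nonneg 5
  have h2 := Real.sqrt_nonneg 2
  split_ifs with ha hb
  · norm_num
  · exact div_nonneg (by linarith) (by positivity)
  · positivity

lemma suzukiF_le_one {r : ℝ} (h0 : 0 ≤ r) (h1 : r < 1) : suzukiF r ≤ 1 := by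
  unfold suzukiF
  have h5 := Real.sqrt_nonneg 5
  have h5s := sqrt5_sq
  split_ifs with ha hb
  · norm_num
  · rw [div_le_one (by nlinarith [not_le.mp ha])]
    push_neg at ha
    nlinarith
  · rw [div_le_one (by linarith)]; linarith

lemma suzukiF_cases {r : ℝ} (h0 : 0 ≤ r) (h1 : r < 1) :
    (suzukiF r * r ^ 2 ≤ 1 - r ∧ 2 * r ^ 2 < 1) ∨ suzukiF r * (1 + r) ≤ 1 := by
  have h5 := Real.sqrt_nonneg 5
  have h5s := sqrt5_sq
  have h2 := Real.sqrt_nonneg 2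
  have h2s := sqrt2_sq
  have h2pos : 0 < Real.sqrt 2 := by nlinarith
  by_cases hb : r < 1 / Real.sqrt 2
  · left
    have hr2 : 2 * r ^ 2 < 1 := by
      have : r * Real.sqrt 2 < 1 := by
        rw [lt_div_iff₀ h2pos] at hb; linarith
      nlinarith
    refine ⟨?_, hr2⟩
    unfold suzukiF
    split_ifs with ha
    · nlinarith
    · push_neg at ha
      have hrpos : 0 < r := by nlinarith
      rw [div_mul_cancel₀]
      positivity
  · right
    unfold suzukiF
    have hg : (Real.sqrt 5 - 1) / 2 < 1 / Real.sqrt 2 := by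
      rw [div_lt_div_iff₀ (by norm_num) h2pos]
      nlinarith
    rw [if_neg (by push_neg at hb ⊢; linarith), if_neg hb]
    rw [div_mul_cancel₀]
    nlinarith


open Filter Topology

theorem stmt_1 {X : Type*} [NormedAddCommGroup X] [NormedSpace ℝ X] [CompleteSpace X]
    (T : X → X) (r : ℝ) (hr0 : 0 ≤ r) (hr1 : r < 1)
    (H : ∀ x y : X, suzukiF r * ‖x - T x‖ ≤ ‖x - y‖ → ‖T x - T y‖ ≤ r * ‖x - y‖) :
    ∃! p : X, T p = p := by
  have hθ0 : 0 ≤ suzukiF r := suzukiF_nonneg hr0 hr1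
  have hθ1 : suzukiF r ≤ 1 := suzukiF_le_one hr0 hr1
  -- (A)
  have hA : ∀ x : X, ‖T x - T (T x)‖ ≤ r * ‖x - T x‖ := fun x =>
    H x (T x) (by nlinarith [norm_nonneg (x - T x)])
  -- iterated (A)
  have hAiter : ∀ (x : X) (n : ℕ), ‖T^[n] x - T^[n + 1] x‖ ≤ r ^ n * ‖x - T x‖ := by
    intro x n
    induction n with
    | zero => simp
    | succ n ih =>
      have ih' : ‖T^[n] x - T (T^[n] x)‖ ≤ r ^ n * ‖x - T x‖ := by
        rwa [Function.iterate_succ_apply' T n x] at ih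
      rw [Function.iterate_succ_apply' T (n + 1) x, Function.iterate_succ_apply' T n x]
      calc ‖T (T^[n] x) - T (T (T^[n] x))‖ ≤ r * ‖T^[n] x - T (T^[n] x)‖ := hA _
        _ ≤ r * (r ^ n * ‖x - T x‖) := mul_le_mul_of_nonneg_left ih' hr0
        _ = r ^ (n + 1) * ‖x - T x‖ := by ring
  -- Picard iterates from 0 form a Cauchy sequence
  set u : ℕ → X := fun n => T^[n] (0 : X) with hu
  have hucauchy : CauchySeq u := by
    apply cauchySeq_of_le_geometric r ‖(0 : X) - T 0‖ hr1
    intro n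
    rw [dist_eq_norm]
    calc ‖u n - u (n + 1)‖ ≤ r ^ n * ‖(0 : X) - T 0‖ := hAiter 0 n
      _ = ‖(0 : X) - T 0‖ * r ^ n := by ring
  obtain ⟨z, hz⟩ := cauchySeq_tendsto_of_complete hucauchy
  have hz' : Tendsto (fun n => u (n + 1)) atTop (𝓝 z) :=
    hz.comp (tendsto_add_atTop_nat 1)
  -- (B)
  have hB : ∀ y : X, y ≠ z → ‖z - T y‖ ≤ r * ‖z - y‖ := by
    intro y hy
    have hpos : 0 < ‖z - y‖ := by
      rw [norm_pos_iff, sub_ne_zero]; exact fun h => hy h.symm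
    have hto0 : Tendsto (fun n => suzukiF r * ‖u n - u (n + 1)‖) atTop (𝓝 0) := by
      have : Tendsto (fun n => ‖u n - u (n + 1)‖) atTop (𝓝 ‖z - z‖) := (hz.sub hz').norm
      simpa using this.const_mul (suzukiF r)
    have hto2 : Tendsto (fun n => ‖u n - y‖) atTop (𝓝 ‖z - y‖) :=
      (hz.sub tendsto_const_nhds).norm
    have hev : ∀ᶠ n in atTop, ‖u (n + 1) - T y‖ ≤ r * ‖u n - y‖ := by
      filter_upwards [hto0.eventually_lt_const (half_pos hpos),
        hto2.eventually_const_lt (half_lt_self hpos)] with n h1 h2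
      have := H (u n) y (by
        rw [show T (u n) = u (n + 1) from (Function.iterate_succ_apply' T n 0).symm]
        linarith)
      rwa [show T (u n) = u (n + 1) from (Function.iterate_succ_apply' T n 0).symm] at this
    have hl1 : Tendsto (fun n => ‖u (n + 1) - T y‖) atTop (𝓝 ‖z - T y‖) :=
      (hz'.sub tendsto_const_nhds).norm
    have hl2 : Tendsto (fun n => r * ‖u n - y‖) atTop (𝓝 (r * ‖z - y‖)) :=
      hto2.const_mul r
    exact le_of_tendsto_of_tendsto hl1 hl2 hev
  -- z is a fixed point
  have hfix : T z = z := by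
    by_contra hne
    have hδ : 0 < ‖z - T z‖ := by
      rw [norm_pos_iff, sub_ne_zero]; exact fun h => hne h.symm
    set δ := ‖z - T z‖ with hδdef
    -- no iterate returns to z
    have hper : ∀ n : ℕ, T^[n + 1] z ≠ z := by
      intro n h
      have h1 := hAiter z (n + 1)
      have h2 : T^[n + 1 + 1] z = T z := by
        rw [Function.iterate_succ_apply' T (n + 1) z, h]
      rw [h, h2] at h1
      have h3 : r ^ (n + 1) < 1 := pow_lt_one₀ hr0 hr1 (Nat.succ_ne_zero n)
      nlinarith
    -- distance of iterates to z
    have ha : ∀ n : ℕ, ‖z - T^[n + 1] z‖ ≤ r ^ n * δ := by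
      intro n
      induction n with
      | zero => simp [δ]
      | succ n ih =>
        calc ‖z - T^[n + 1 + 1] z‖ = ‖z - T (T^[n + 1] z)‖ := by
              rw [Function.iterate_succ_apply' T (n + 1) z]
          _ ≤ r * ‖z - T^[n + 1] z‖ := hB _ (hper n)
          _ ≤ r * (r ^ n * δ) := by
              apply mul_le_mul_of_nonneg_left ih hr0
          _ = r ^ (n + 1) * δ := by ring
    rcases suzukiF_cases hr0 hr1 with ⟨hc1, hc2⟩ | hc
    · -- case r < 1/√2
      set z1 := T z
      set z2 := T z1 with hz2
      set z3 := T z2 with hz3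
      have e1 : ‖z1 - z2‖ ≤ r * δ := hA z
      have e2 : ‖z2 - z3‖ ≤ r * (r * δ) :=
        le_trans (hA z1) (mul_le_mul_of_nonneg_left e1 hr0)
      have e3 : ‖z - z2‖ ≤ r * δ := by
        have := ha 1
        norm_num at this
        simpa [Function.iterate_succ_apply', z2, z1] using this
      have e4 : δ - r * δ ≤ ‖z - z2‖ := by
        have tri : δ ≤ ‖z - z2‖ + ‖z2 - z1‖ := by
          simpa [hδdef] using norm_sub_le_norm_sub_add_norm_sub z z2 z1
        have := norm_sub_rev z2 z1
        linarith
      have e5 : suzukiF r * ‖z2 - z3‖ ≤ ‖z2 - z‖ := by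
        have h1 : suzukiF r * ‖z2 - z3‖ ≤ suzukiF r * (r * (r * δ)) :=
          mul_le_mul_of_nonneg_left e2 hθ0
        have h2 : ‖z2 - z‖ = ‖z - z2‖ := norm_sub_rev _ _
        nlinarith
      have e6 : ‖z3 - z1‖ ≤ r * ‖z2 - z‖ := H z2 z e5
      have e7 : ‖z - z3‖ ≤ r ^ 2 * δ := by
        have := ha 2
        simpa [Function.iterate_succ_apply', z3, z2, z1] using this
      have e8 : δ ≤ ‖z - z3‖ + ‖z3 - z1‖ := by
        simpa [hδdef] using norm_sub_le_norm_sub_add_norm_sub z z3 z1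
      have e9 : ‖z2 - z‖ ≤ r * δ := by rw [norm_sub_rev]; exact e3
      nlinarith [norm_nonneg (z3 - z1), norm_nonneg (z - z3)]
    · -- case r ≥ 1/√2
      obtain ⟨n, hn⟩ := exists_pow_lt_of_lt_one (by norm_num : (0:ℝ) < 1/2) hr1
      set w := T^[n + 1] z with hw
      have aw : ‖z - w‖ ≤ r ^ n * δ := ha n
      have aw2 : ‖z - T w‖ ≤ r * ‖z - w‖ := hB w (hper n)
      have tri : ‖w - T w‖ ≤ ‖w - z‖ + ‖z - T w‖ := norm_sub_le_norm_sub_add_norm_sub w z (T w)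
      have e5 : suzukiF r * ‖w - T w‖ ≤ ‖w - z‖ := by
        have h1 : ‖w - T w‖ ≤ (1 + r) * ‖z - w‖ := by
          have := norm_sub_rev w z
          linarith
        have h2 : suzukiF r * ‖w - T w‖ ≤ suzukiF r * ((1 + r) * ‖z - w‖) :=
          mul_le_mul_of_nonneg_left h1 hθ0
        have h3 : (0:ℝ) ≤ (1 - suzukiF r * (1 + r)) * ‖z - w‖ :=
          mul_nonneg (by linarith) (norm_nonneg _)
        have h4 := norm_sub_rev w z
        nlinarith
      have e6 : ‖T w - T z‖ ≤ r * ‖w - z‖ := H w z e5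
      have e7 : ‖z - T z‖ ≤ ‖z - T w‖ + ‖T w - T z‖ :=
        norm_sub_le_norm_sub_add_norm_sub z (T w) (T z)
      have hrn : r ^ n < 1 / 2 := hn
      have hwz : ‖w - z‖ = ‖z - w‖ := norm_sub_rev w z
      have hpow : r * (r ^ n * δ) ≤ r ^ n * δ :=
        mul_le_of_le_one_left (mul_nonneg (pow_nonneg hr0 n) (norm_nonneg _)) hr1.le
      nlinarith [norm_nonneg (z - w)]
  refine ⟨z, hfix, fun y hy => ?_⟩
  have h0 : suzukiF r * ‖y - T y‖ ≤ ‖y - z‖ := by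
    rw [hy, sub_self, norm_zero, mul_zero]
    exact norm_nonneg _
  have := H y z h0
  rw [hy, hfix] at this
  have : (1 - r) * ‖y - z‖ ≤ 0 := by linarith
  have : ‖y - z‖ ≤ 0 := by nlinarith [norm_nonneg (y - z)]
  have : y - z = 0 := by
    rw [← norm_le_zero_iff]; exact this
  exact sub_eq_zero.mp this
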